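/- arXiv:2603.16613 — 2 statements merged into one kernel-verified Lean document; each statement's English description precedes it below -/
import Mathlib

section
/- Let G be a reflexive digraph admitting an Olšák polymorphism. Then the K-equivalence of G coincides with the D-equivalence of G. -/
/-!
`K` retracts onto `D` by collapsing `2` and `3`, so every image of `D` is an image of `K`.
Conversely, in an image `a ⇄ b → c ⇄ d → a` of `K` the symmetric edges make `a, b` and `c, d`
`D`-equivalent, and the Olšák polymorphism connects the opposite corners `a` and `c` by a
chain of images of `D` whose vertices are values of `o` on tuples from `{a, b, c, d}`.
-/

namespace DigraphHM6

/-- `f` is a polymorphism of the digraph `(V, E)`. -/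
def IsPoly {V : Type*} (E : V → V → Prop) {n : ℕ} (f : (Fin n → V) → V) : Prop :=
  ∀ a b : Fin n → V, (∀ i, E (a i) (b i)) → E (f a) (f b)

/-- `f` is idempotent. -/
def IsIdem {V : Type*} {n : ℕ} (f : (Fin n → V) → V) : Prop :=
  ∀ x : V, f (fun _ => x) = x

/-- `o` is an Olšák operation: a 6-ary idempotent operation satisfying
`o(x,x,x,y,y,y) = o(x,y,y,x,x,y) = o(y,x,y,x,y,x)`. -/
def IsOlsak {V : Type*} (o : (Fin 6 → V) → V) : Prop :=
  IsIdem o ∧ ∀ x y : V,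
    o ![x, x, x, y, y, y] = o ![x, y, y, x, x, y] ∧
    o ![x, y, y, x, x, y] = o ![y, x, y, x, y, x]

/-- `φ` is a digraph homomorphism from `(W, EH)` to `(V, EG)`. -/
def IsHom {W V : Type*} (EH : W → W → Prop) (EG : V → V → Prop) (φ : W → V) : Prop :=
  ∀ u v : W, EH u v → EG (φ u) (φ v)

/-- The `H`-equivalence of `G`: the equivalence relation generated by the relation
holding between `g` and `g'` whenever they both lie in the range of a homomorphism
from `H` to `G`. -/
def HEqv {W V : Type*} (EH : W → W → Prop) (EG : V → V → Prop) : V → V → Prop :=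
  Relation.EqvGen (fun g g' =>
    ∃ φ : W → V, IsHom EH EG φ ∧ (∃ u, φ u = g) ∧ (∃ v, φ v = g'))

/-- The reflexive digraph `D` on `{0,1,2}` with non-loop edges
`0 → 1`, `1 → 0`, `1 → 2`, `2 → 0`. -/
def DEdge : Fin 3 → Fin 3 → Prop := fun a b =>
  a = b ∨ (a = 0 ∧ b = 1) ∨ (a = 1 ∧ b = 0) ∨ (a = 1 ∧ b = 2) ∨ (a = 2 ∧ b = 0)

/-- The reflexive digraph `K` on `{0,1,2,3}` with non-loop edges
`0 → 1`, `1 → 0`, `1 → 2`, `2 → 3`, `3 → 2`, `3 → 0`. -/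
def KEdge : Fin 4 → Fin 4 → Prop := fun a b =>
  a = b ∨ (a = 0 ∧ b = 1) ∨ (a = 1 ∧ b = 0) ∨ (a = 1 ∧ b = 2) ∨
    (a = 2 ∧ b = 3) ∨ (a = 3 ∧ b = 2) ∨ (a = 3 ∧ b = 0)

instance : DecidableRel DEdge := fun a b => by unfold DEdge; infer_instance

instance : DecidableRel KEdge := fun a b => by unfold KEdge; infer_instance

section HEqv

variable {W W' V : Type*} {EH : W → W → Prop} {EH' : W' → W' → Prop} {EG : V → V → Prop}

theorem HEqv.symm {a b : V} (h : HEqv EH EG a b) : HEqv EH EG b a :=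
  Relation.EqvGen.symm _ _ h

theorem HEqv.trans {a b c : V} (hab : HEqv EH EG a b) (hbc : HEqv EH EG b c) :
    HEqv EH EG a c :=
  Relation.EqvGen.trans _ _ _ hab hbc

instance : Trans (HEqv EH EG) (HEqv EH EG) (HEqv EH EG) := ⟨HEqv.trans⟩

theorem IsHom.comp {U : Type*} {EU : U → U → Prop} {ψ : W → V} {r : U → W}
    (hψ : IsHom EH EG ψ) (hr : IsHom EU EH r) : IsHom EU EG (ψ ∘ r) :=
  fun u v huv => hψ _ _ (hr u v huv)

theorem hEqv_of_isHom {φ : W → V} (hφ : IsHom EH EG φ) (u v : W) :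
    HEqv EH EG (φ u) (φ v) :=
  Relation.EqvGen.rel _ _ ⟨φ, hφ, ⟨u, rfl⟩, ⟨v, rfl⟩⟩

/-- A surjective homomorphism `H → H'` turns every image of `H'` into an image of `H`. -/
theorem hEqv_of_surjective_isHom {r : W → W'} (hr : IsHom EH EH' r)
    (hsurj : Function.Surjective r) {a b : V} (hab : HEqv EH' EG a b) : HEqv EH EG a b := by
  refine Relation.EqvGen.mono ?_ a b hab
  rintro _ _ ⟨ψ, hψ, ⟨u, rfl⟩, ⟨v, rfl⟩⟩
  obtain ⟨u', rfl⟩ := hsurj u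
  obtain ⟨v', rfl⟩ := hsurj v
  exact ⟨ψ ∘ r, hψ.comp hr, ⟨u', rfl⟩, ⟨v', rfl⟩⟩

theorem hEqv_of_forall_isHom
    (h : ∀ φ : W → V, IsHom EH EG φ → ∀ u v, HEqv EH' EG (φ u) (φ v))
    {a b : V} (hab : HEqv EH EG a b) : HEqv EH' EG a b := by
  refine (Relation.EqvGen.is_equivalence _).eqvGen_iff.mp (Relation.EqvGen.mono ?_ a b hab)
  rintro _ _ ⟨φ, hφ, ⟨u, rfl⟩, ⟨v, rfl⟩⟩
  exact h φ hφ u v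

end HEqv

section Polymorphism

variable {V W : Type*} {E : V → V → Prop}

theorem IsPoly.edge_comp {EH : W → W → Prop} {n : ℕ} {o : (Fin n → V) → V}
    (hpoly : IsPoly E o) {φ : W → V} (hφ : IsHom EH E φ) {s t : Fin n → W}
    (hst : ∀ i, EH (s i) (t i)) : E (o (φ ∘ s)) (o (φ ∘ t)) :=
  hpoly _ _ fun i => hφ _ _ (hst i)

theorem IsIdem.comp_const {n : ℕ} {o : (Fin n → V) → V} (hidem : IsIdem o) (φ : W → V)
    (w : W) : o (φ ∘ fun _ => w) = φ w :=
  hidem (φ w)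

theorem IsOlsak.comp_eq_left {o : (Fin 6 → V) → V} (holsak : IsOlsak o) (φ : W → V)
    (x y : W) : o (φ ∘ ![x, x, x, y, y, y]) = o (φ ∘ ![x, y, y, x, x, y]) := by
  rw [← FinVec.map_eq, ← FinVec.map_eq]
  exact (holsak.2 (φ x) (φ y)).1

theorem IsOlsak.comp_eq_right {o : (Fin 6 → V) → V} (holsak : IsOlsak o) (φ : W → V)
    (x y : W) : o (φ ∘ ![x, y, y, x, x, y]) = o (φ ∘ ![y, x, y, x, y, x]) := by
  rw [← FinVec.map_eq, ← FinVec.map_eq]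
  exact (holsak.2 (φ x) (φ y)).2

end Polymorphism

section DEquivalence

variable {V : Type*} {E : V → V → Prop}

theorem isHom_dEdge_of_edges (hrefl : ∀ v, E v v) {x y z : V} (hxy : E x y) (hyx : E y x)
    (hyz : E y z) (hzx : E z x) : IsHom DEdge E ![x, y, z] := by
  rintro u v (rfl | ⟨rfl, rfl⟩ | ⟨rfl, rfl⟩ | ⟨rfl, rfl⟩ | ⟨rfl, rfl⟩)
  exacts [hrefl _, hxy, hyx, hyz, hzx]

theorem dEqv_of_edge_of_edge (hrefl : ∀ v, E v v) {x y : V} (hxy : E x y) (hyx : E y x) :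
    HEqv DEdge E x y :=
  hEqv_of_isHom (isHom_dEdge_of_edges hrefl hxy hyx (hrefl y) hyx) 0 1

/-- Six images of `D`, each obtained by applying `o` coordinatewise to images of `D` inside the
image of `K`, link `φ 0` to `φ 2`; consecutive ones share a vertex, in two cases only up to an
Olšák identity. -/
theorem dEqv_of_isHom_kEdge_zero_two (hrefl : ∀ v, E v v) {o : (Fin 6 → V) → V}
    (hpoly : IsPoly E o) (holsak : IsOlsak o) {φ : Fin 4 → V} (hφ : IsHom KEdge E φ) :
    HEqv DEdge E (φ 0) (φ 2) := by
  have edge {s t : Fin 6 → Fin 4} (hst : ∀ i, KEdge (s i) (t i)) :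
      E (o (φ ∘ s)) (o (φ ∘ t)) :=
    hpoly.edge_comp hφ hst
  have hD₁ : IsHom DEdge E ![o (φ ∘ fun _ => 0), o (φ ∘ ![1, 0, 0, 0, 1, 1]),
      o (φ ∘ ![1, 1, 1, 0, 0, 0])] :=
    isHom_dEdge_of_edges hrefl (edge (by decide)) (edge (by decide)) (edge (by decide))
      (edge (by decide))
  have hD₂ : IsHom DEdge E ![o (φ ∘ ![1, 1, 1, 2, 0, 1]), o (φ ∘ ![1, 0, 0, 3, 1, 0]),
      o (φ ∘ ![1, 1, 1, 0, 0, 0])] :=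
    isHom_dEdge_of_edges hrefl (edge (by decide)) (edge (by decide)) (edge (by decide))
      (holsak.comp_eq_left φ 1 0 ▸ edge (by decide))
  have hD₃ : IsHom DEdge E ![o (φ ∘ ![2, 0, 1, 3, 2, 1]), o (φ ∘ ![3, 0, 0, 3, 3, 0]),
      o (φ ∘ ![1, 0, 0, 3, 1, 0])] :=
    isHom_dEdge_of_edges hrefl (edge (by decide)) (edge (by decide))
      (holsak.comp_eq_right φ 3 0 ▸ edge (by decide)) (edge (by decide))
  have hD₄ : IsHom DEdge E ![o (φ ∘ ![2, 0, 0, 2, 2, 0]), o (φ ∘ ![2, 0, 1, 3, 2, 1]),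
      o (φ ∘ ![3, 1, 1, 3, 3, 2])] :=
    isHom_dEdge_of_edges hrefl (edge (by decide)) (edge (by decide)) (edge (by decide))
      (holsak.comp_eq_right φ 2 0 ▸ edge (by decide))
  have hD₅ : IsHom DEdge E ![o (φ ∘ ![2, 0, 0, 2, 3, 2]), o (φ ∘ ![3, 1, 1, 3, 3, 2]),
      o (φ ∘ ![3, 3, 3, 2, 2, 2])] :=
    isHom_dEdge_of_edges hrefl (edge (by decide)) (edge (by decide))
      (holsak.comp_eq_left φ 3 2 ▸ edge (by decide)) (edge (by decide))
  have hD₆ : IsHom DEdge E ![o (φ ∘ ![3, 3, 3, 2, 2, 2]), o (φ ∘ fun _ => 3),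
      o (φ ∘ fun _ => 2)] :=
    isHom_dEdge_of_edges hrefl (edge (by decide)) (edge (by decide)) (edge (by decide))
      (edge (by decide))
  calc φ 0 = o (φ ∘ fun _ => 0) := (holsak.1.comp_const φ 0).symm
    HEqv DEdge E _ (o (φ ∘ ![1, 1, 1, 0, 0, 0])) := hEqv_of_isHom hD₁ 0 2
    HEqv DEdge E _ (o (φ ∘ ![1, 0, 0, 3, 1, 0])) := hEqv_of_isHom hD₂ 2 1
    HEqv DEdge E _ (o (φ ∘ ![2, 0, 1, 3, 2, 1])) := hEqv_of_isHom hD₃ 2 0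
    HEqv DEdge E _ (o (φ ∘ ![3, 1, 1, 3, 3, 2])) := hEqv_of_isHom hD₄ 1 2
    HEqv DEdge E _ (o (φ ∘ ![3, 3, 3, 2, 2, 2])) := hEqv_of_isHom hD₅ 1 2
    HEqv DEdge E _ (o (φ ∘ fun _ => 2)) := hEqv_of_isHom hD₆ 0 2
    _ = φ 2 := holsak.1.comp_const φ 2

theorem dEqv_of_isHom_kEdge (hrefl : ∀ v, E v v) {o : (Fin 6 → V) → V}
    (hpoly : IsPoly E o) (holsak : IsOlsak o) {φ : Fin 4 → V} (hφ : IsHom KEdge E φ)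
    (u : Fin 4) : HEqv DEdge E (φ u) (φ 0) := by
  have h02 := dEqv_of_isHom_kEdge_zero_two hrefl hpoly holsak hφ
  fin_cases u
  · exact Relation.EqvGen.refl _
  · exact dEqv_of_edge_of_edge hrefl (hφ 1 0 (by decide)) (hφ 0 1 (by decide))
  · exact h02.symm
  · exact (dEqv_of_edge_of_edge hrefl (hφ 3 2 (by decide)) (hφ 2 3 (by decide))).trans h02.symm

end DEquivalence

def kToD : Fin 4 → Fin 3 := ![0, 1, 2, 2]

theorem isHom_kToD : IsHom KEdge DEdge kToD := by
  unfold IsHom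
  decide

theorem kToD_surjective : Function.Surjective kToD := by
  decide

/-- If a reflexive digraph admits an Olšák polymorphism, then its `K`-equivalence
coincides with its `D`-equivalence. -/
theorem kEqv_eq_dEqv_of_olsak {V : Type*} (E : V → V → Prop)
    (hrefl : ∀ v, E v v) (o : (Fin 6 → V) → V)
    (hpoly : IsPoly E o) (holsak : IsOlsak o) :
    ∀ a b : V, HEqv KEdge E a b ↔ HEqv DEdge E a b := by
  intro a b
  refine ⟨hEqv_of_forall_isHom fun φ hφ u v => ?_,
    hEqv_of_surjective_isHom isHom_kToD kToD_surjective⟩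
  exact (dEqv_of_isHom_kEdge hrefl hpoly holsak hφ u).trans
    (dEqv_of_isHom_kEdge hrefl hpoly holsak hφ v).symm

end DigraphHM6
end

section
/- Let G be a reflexive digraph and let ν be its radical equivalence. Then ν is the smallest equivalence μ on the vertex set of G such that the quotient digraph G/μ is antisymmetric, i.e., ν has antisymmetric quotient, and every equivalence μ with G/μ antisymmetric contains ν. (A digraph is antisymmetric if A → B and B → A imply A = B.) -/
/-!
Every `νᵢ` lies inside any equivalence `μ` with antisymmetric quotient: since `νᵢ ⊆ μ`, a
symmetric edge of `G/νᵢ` is a symmetric edge of `G/μ`, which antisymmetry collapses into `μ`.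
Conversely, the `νᵢ` increase, so a symmetric edge of `G/ν` is already one of some `G/νᵢ` and
is absorbed into `νᵢ₊₁ ⊆ ν`. Reflexivity of `G` makes `νᵢ₊₁` the extreme equivalence of `G/νᵢ`,
hence an equivalence, and `ν` is an increasing union of equivalences.
-/

namespace DigraphHM8

/-- One step of a symmetric path: edges in both directions. -/
def SymStep {V : Type*} (E : V → V → Prop) : V → V → Prop :=
  fun u v => E u v ∧ E v u

/-- The extreme equivalence: being connected by a symmetric path. -/
def ExtremeEq {V : Type*} (E : V → V → Prop) : V → V → Prop :=
  Relation.ReflTransGen (SymStep E)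

/-- The edge relation of the quotient digraph `G/ν`, pulled back to vertices:
`a → b` modulo `ν` iff some `a' ∈ a/ν` and `b' ∈ b/ν` satisfy `E a' b'`.
For an equivalence `ν`, the `ν`-classes `A = a/ν` and `B = b/ν` satisfy `A → B`
in `G/ν` iff `SatEdge E ν a b`. -/
def SatEdge {V : Type*} (E ν : V → V → Prop) : V → V → Prop :=
  fun a b => ∃ a' b', ν a a' ∧ ν b b' ∧ E a' b'

/-- The increasing sequence `ν₀ ⊆ ν₁ ⊆ …` defining the radical equivalence:
`ν₀` is the extreme equivalence of `G`, and `νᵢ₊₁` relates `a` and `b` iff their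
`νᵢ`-classes are related by the extreme equivalence of the quotient `G/νᵢ`. -/
def RadSeq {V : Type*} (E : V → V → Prop) : ℕ → (V → V → Prop)
  | 0 => ExtremeEq E
  | (i + 1) => fun a b => RadSeq E i a b ∨ ExtremeEq (SatEdge E (RadSeq E i)) a b

/-- The radical equivalence `ν = ⋃ᵢ νᵢ`. -/
def Radical {V : Type*} (E : V → V → Prop) : V → V → Prop :=
  fun a b => ∃ i : ℕ, RadSeq E i a b

/-- The quotient `G/μ` is antisymmetric: whenever there are edges both ways between the
`μ`-classes of `a` and of `b`, those classes are equal. -/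
def QuotAntisymm {V : Type*} (E μ : V → V → Prop) : Prop :=
  ∀ a b : V, SatEdge E μ a b → SatEdge E μ b a → μ a b

section

variable {V : Type*} {E : V → V → Prop}

lemma satEdge_mono {ν μ : V → V → Prop} (h : ν ≤ μ) : SatEdge E ν ≤ SatEdge E μ :=
  fun _ _ ⟨a', b', ha, hb, hE⟩ => ⟨a', b', h _ _ ha, h _ _ hb, hE⟩

lemma le_satEdge {ν : V → V → Prop} (hν : ∀ v, ν v v) : E ≤ SatEdge E ν :=
  fun a b h => ⟨a, b, hν a, hν b, h⟩

lemma symStep_satEdge_of_rel (hrefl : ∀ v, E v v) {ν : V → V → Prop} (hν : ∀ v, ν v v)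
    {a b : V} (h : ν a b) : SymStep (SatEdge E ν) a b :=
  ⟨⟨b, b, h, hν b, hrefl b⟩, ⟨b, b, hν b, h, hrefl b⟩⟩

lemma extremeEq_equivalence (E : V → V → Prop) : Equivalence (ExtremeEq E) := by
  have : Std.Symm (SymStep E) := ⟨fun _ _ h => ⟨h.2, h.1⟩⟩
  exact ⟨fun _ => .refl, Std.Symm.symm (r := Relation.ReflTransGen (SymStep E)) _ _, .trans⟩

namespace QuotAntisymm

variable {μ : V → V → Prop}

lemma extremeEq_le (hanti : QuotAntisymm E μ) (hμ : Equivalence μ) : ExtremeEq E ≤ μ :=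
  Relation.reflTransGen_le_of_equivalence_of_le hμ fun a b h =>
    hanti a b (le_satEdge hμ.refl a b h.1) (le_satEdge hμ.refl b a h.2)

lemma extremeEq_satEdge_le (hanti : QuotAntisymm E μ) (hμ : Equivalence μ)
    {ν : V → V → Prop} (hνμ : ν ≤ μ) : ExtremeEq (SatEdge E ν) ≤ μ :=
  Relation.reflTransGen_le_of_equivalence_of_le hμ fun a b h =>
    hanti a b (satEdge_mono hνμ a b h.1) (satEdge_mono hνμ b a h.2)

lemma radSeq_le (hanti : QuotAntisymm E μ) (hμ : Equivalence μ) : ∀ i, RadSeq E i ≤ μ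
  | 0 => hanti.extremeEq_le hμ
  | i + 1 => fun a b h =>
    h.elim (hanti.radSeq_le hμ i a b) (hanti.extremeEq_satEdge_le hμ (hanti.radSeq_le hμ i) a b)

end QuotAntisymm

lemma radSeq_monotone (E : V → V → Prop) : Monotone (RadSeq E) :=
  monotone_nat_of_le_succ fun _ _ _ h => Or.inl h

lemma radSeq_succ (hrefl : ∀ v, E v v) {i : ℕ} (hi : ∀ v, RadSeq E i v v) :
    RadSeq E (i + 1) = ExtremeEq (SatEdge E (RadSeq E i)) :=
  funext₂ fun _ _ => propext <| or_iff_right_of_imp fun h =>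
    .single (symStep_satEdge_of_rel hrefl hi h)

lemma radSeq_equivalence (hrefl : ∀ v, E v v) : ∀ i, Equivalence (RadSeq E i)
  | 0 => extremeEq_equivalence E
  | i + 1 => by
    rw [radSeq_succ hrefl (radSeq_equivalence hrefl i).refl]
    exact extremeEq_equivalence _

lemma radical_equivalence (hrefl : ∀ v, E v v) : Equivalence (Radical E) where
  refl a := ⟨0, (radSeq_equivalence hrefl 0).refl a⟩
  symm := fun ⟨i, h⟩ => ⟨i, (radSeq_equivalence hrefl i).symm h⟩
  trans := fun ⟨i, h⟩ ⟨j, h'⟩ => ⟨max i j, (radSeq_equivalence hrefl _).trans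
    (radSeq_monotone E (le_max_left i j) _ _ h) (radSeq_monotone E (le_max_right i j) _ _ h')⟩

lemma exists_satEdge_radSeq_of_satEdge_radical {a b : V} (h : SatEdge E (Radical E) a b) :
    ∃ i, SatEdge E (RadSeq E i) a b := by
  obtain ⟨a', b', ⟨i, ha⟩, ⟨j, hb⟩, hE⟩ := h
  exact ⟨max i j, a', b', radSeq_monotone E (le_max_left i j) _ _ ha,
    radSeq_monotone E (le_max_right i j) _ _ hb, hE⟩

lemma quotAntisymm_radical : QuotAntisymm E (Radical E) := by
  intro a b hab hba
  obtain ⟨i, hi⟩ := exists_satEdge_radSeq_of_satEdge_radical hab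
  obtain ⟨j, hj⟩ := exists_satEdge_radSeq_of_satEdge_radical hba
  refine ⟨max i j + 1, Or.inr (.single ⟨?_, ?_⟩)⟩
  · exact satEdge_mono (radSeq_monotone E (le_max_left i j)) a b hi
  · exact satEdge_mono (radSeq_monotone E (le_max_right i j)) b a hj

end

/-- For a reflexive digraph `G`, the radical equivalence `ν` is the smallest
equivalence `μ` on the vertex set such that the quotient `G/μ` is antisymmetric:
`ν` is an equivalence with antisymmetric quotient, and every equivalence `μ`
with antisymmetric quotient contains `ν`. -/
theorem radical_smallest_antisymmetric_quotient {V : Type*} (E : V → V → Prop)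
    (hrefl : ∀ v, E v v) :
    Equivalence (Radical E) ∧ QuotAntisymm E (Radical E) ∧
      ∀ μ : V → V → Prop, Equivalence μ → QuotAntisymm E μ →
        ∀ a b : V, Radical E a b → μ a b :=
  ⟨radical_equivalence hrefl, quotAntisymm_radical,
    fun _ hμ hanti a b ⟨i, h⟩ => hanti.radSeq_le hμ i a b h⟩

end DigraphHM8
end
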